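/- arXiv:1102.4511 — 3 statements merged into one kernel-verified Lean document; each statement's English description precedes it below -/
import Mathlib

section
/- Let Z : [0,2π] → ℝ be continuous, K ∈ ℝ, ω > 0, and set r = 0 if K·Z(θ) ≥ 0 for all θ, and r = |min_{θ∈[0,2π]} K·Z(θ)| otherwise. Then there exists J* > 0 with ω + K·Z(θ)·J* > 0 for all θ ∈ [0,2π] and ∫₀^{2π} J*/(ω + K·Z(θ)·J*) dθ = 1 if and only if lim_{s→r⁺} ∫₀^{2π} 1/(K·Z(θ) + s) dθ > 1. Moreover, such J* is unique when it exists. -/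
/-!
Put `s = ω / J`. The flux condition for `J > 0` says exactly that `s` exceeds the threshold `r`
(so that `K·Z + s > 0` on `[0, 2π]`) and that `F s = ∫₀^{2π} 1/(K·Z θ + s) dθ`
(`recipIntegral`) equals `1`. On `(r, ∞)` the function `F` is continuous and strictly
decreasing, with limit `L` at `r⁺` and limit `0` at `+∞`, so by the intermediate value theorem
it takes the value `1` exactly once precisely when `1 < L`.
-/

open Real MeasureTheory Set Classical
open Filter Topology Interval

noncomputable def recipIntegral (f : ℝ → ℝ) (a b s : ℝ) : ℝ :=
  ∫ x in a..b, 1 / (f x + s)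

lemma lt_iff_pos_and_forall_add_pos {g : ℝ → ℝ} {S : Set ℝ} (hS : IsCompact S)
    (hne : S.Nonempty) (hg : ContinuousOn g S) {r : ℝ}
    (hr : r = if ∀ x ∈ S, 0 ≤ g x then 0 else |sInf (g '' S)|) (s : ℝ) :
    r < s ↔ 0 < s ∧ ∀ x ∈ S, 0 < g x + s := by
  split_ifs at hr with hnonneg
  · subst hr
    exact ⟨fun hs => ⟨hs, fun x hx => by linarith [hnonneg x hx]⟩, And.left⟩
  · push Not at hnonneg
    obtain ⟨y, hy, hgy⟩ := hnonneg
    obtain ⟨m, hm, hmin⟩ := hS.exists_isMinOn hne hg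
    replace hmin : ∀ x ∈ S, g m ≤ g x := isMinOn_iff.1 hmin
    have hleast : IsLeast (g '' S) (g m) := ⟨⟨m, hm, rfl⟩, forall_mem_image.2 hmin⟩
    have hr' : r = -g m := by
      rw [hr, hleast.csInf_eq, abs_of_neg ((hmin y hy).trans_lt hgy)]
    subst hr'
    exact ⟨fun hs => ⟨by linarith [hmin y hy], fun x hx => by linarith [hmin x hx]⟩,
      fun ⟨_, hpos⟩ => by linarith [hpos m hm]⟩

lemma AntitoneOn.le_of_tendsto_nhdsGT {β : Type*} [Preorder β] [TopologicalSpace β]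
    [ClosedIciTopology β] {φ : ℝ → β} {r s : ℝ} {L : β} (hφ : AntitoneOn φ (Ioi r))
    (hL : Tendsto φ (𝓝[>] r) (𝓝 L)) (hs : r < s) : φ s ≤ L :=
  ge_of_tendsto hL <| by
    filter_upwards [Ioo_mem_nhdsGT hs] with u hu using hφ hu.1 hs hu.2.le

lemma StrictAntiOn.existsUnique_eq_iff_lt_of_tendsto {φ : ℝ → ℝ} {r c : ℝ} {L : EReal}
    (hanti : StrictAntiOn φ (Ioi r)) (hcont : ContinuousOn φ (Ioi r))
    (hL : Tendsto (fun s => (φ s : EReal)) (𝓝[>] r) (𝓝 L)) (htop : Tendsto φ atTop (𝓝 0))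
    (hc : 0 < c) :
    (∃! s, r < s ∧ φ s = c) ↔ (c : EReal) < L := by
  constructor
  · rintro ⟨s, ⟨hrs, hφs⟩, -⟩
    have hmid : r < (r + s) / 2 := by linarith
    have hcoe : AntitoneOn (fun s => (φ s : EReal)) (Ioi r) :=
      fun u hu v hv huv => EReal.coe_le_coe_iff.2 (hanti.antitoneOn hu hv huv)
    calc (c : EReal) = φ s := by rw [hφs]
      _ < φ ((r + s) / 2) := EReal.coe_lt_coe_iff.2 (hanti hmid hrs (by linarith))
      _ ≤ L := hcoe.le_of_tendsto_nhdsGT hL hmid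
  · intro hcL
    obtain ⟨s₁, hcs₁, hrs₁⟩ :=
      ((hL.eventually (lt_mem_nhds hcL)).and self_mem_nhdsWithin).exists
    obtain ⟨s₂, hs₂c, hs₁₂⟩ :=
      ((htop.eventually (gt_mem_nhds hc)).and (eventually_ge_atTop s₁)).exists
    obtain ⟨s, hs, hφs⟩ := intermediate_value_Icc' hs₁₂
      (hcont.mono fun _ hu => lt_of_lt_of_le hrs₁ hu.1)
      ⟨hs₂c.le, (EReal.coe_lt_coe_iff.1 hcs₁).le⟩
    have hrs : r < s := lt_of_lt_of_le hrs₁ hs.1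
    exact ⟨s, ⟨hrs, hφs⟩, fun t ⟨hrt, hφt⟩ => hanti.injOn hrt hrs (hφt.trans hφs.symm)⟩

section recipIntegral

variable {f : ℝ → ℝ} {a b r s : ℝ}

lemma intervalIntegrable_one_div_add (hf : ContinuousOn f (Icc a b)) (hab : a ≤ b)
    (hlow : ∀ x ∈ Icc a b, -r ≤ f x) (hs : r < s) :
    IntervalIntegrable (fun x => 1 / (f x + s)) volume a b := by
  refine ContinuousOn.intervalIntegrable ?_
  rw [uIcc_of_le hab]
  exact continuousOn_const.div (hf.add continuousOn_const)
    fun x hx => by linarith [hlow x hx]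

lemma recipIntegral_nonneg (hab : a ≤ b) (hlow : ∀ x ∈ Icc a b, -r ≤ f x) (hs : r < s) :
    0 ≤ recipIntegral f a b s :=
  intervalIntegral.integral_nonneg hab fun x hx => by
    have := hlow x hx
    positivity [show 0 < f x + s by linarith]

lemma recipIntegral_le (hab : a ≤ b) (hlow : ∀ x ∈ Icc a b, -r ≤ f x) (hs : r < s) :
    recipIntegral f a b s ≤ (b - a) / (s - r) := by
  have hbound : ∀ x ∈ Ι a b, ‖1 / (f x + s)‖ ≤ 1 / (s - r) := by
    intro x hx
    rw [uIoc_of_le hab] at hx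
    have := hlow x (Ioc_subset_Icc_self hx)
    rw [Real.norm_of_nonneg (by positivity [show 0 < f x + s by linarith])]
    exact one_div_le_one_div_of_le (by linarith) (by linarith)
  calc recipIntegral f a b s ≤ ‖recipIntegral f a b s‖ := le_norm_self _
    _ ≤ 1 / (s - r) * |b - a| := intervalIntegral.norm_integral_le_of_norm_le_const hbound
    _ = (b - a) / (s - r) := by rw [abs_of_nonneg (sub_nonneg.2 hab)]; ring

lemma tendsto_recipIntegral_atTop (hab : a ≤ b) (hlow : ∀ x ∈ Icc a b, -r ≤ f x) :
    Tendsto (recipIntegral f a b) atTop (𝓝 0) := by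
  have hbound : Tendsto (fun s => (b - a) / (s - r)) atTop (𝓝 0) :=
    tendsto_const_nhds.div_atTop (tendsto_atTop_add_const_right _ _ tendsto_id)
  refine tendsto_of_tendsto_of_tendsto_of_le_of_le' tendsto_const_nhds hbound ?_ ?_ <;>
    filter_upwards [eventually_gt_atTop r] with s hs
  exacts [recipIntegral_nonneg hab hlow hs, recipIntegral_le hab hlow hs]

lemma recipIntegral_strictAntiOn (hf : ContinuousOn f (Icc a b)) (hab : a < b)
    (hlow : ∀ x ∈ Icc a b, -r ≤ f x) : StrictAntiOn (recipIntegral f a b) (Ioi r) := by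
  intro s (hs : r < s) t (ht : r < t) hst
  have hs_int := intervalIntegrable_one_div_add hf hab.le hlow hs
  have ht_int := intervalIntegrable_one_div_add hf hab.le hlow ht
  have hdiff : 0 < ∫ x in a..b, (1 / (f x + s) - 1 / (f x + t)) := by
    refine intervalIntegral.intervalIntegral_pos_of_pos_on (hs_int.sub ht_int)
      (fun x hx => ?_) hab
    have := hlow x (Ioo_subset_Icc_self hx)
    exact sub_pos.2 (one_div_lt_one_div_of_lt (by linarith) (by linarith))
  rw [intervalIntegral.integral_sub hs_int ht_int] at hdiff
  exact sub_pos.1 hdiff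

lemma recipIntegral_continuousOn (hf : ContinuousOn f (Icc a b)) (hab : a ≤ b)
    (hlow : ∀ x ∈ Icc a b, -r ≤ f x) : ContinuousOn (recipIntegral f a b) (Ioi r) := by
  intro s (hs : r < s)
  have hnear : ∀ᶠ t in 𝓝 s, (r + s) / 2 < t := Ioi_mem_nhds (by linarith)
  refine (intervalIntegral.continuousAt_of_dominated_interval (bound := fun _ => 2 / (s - r))
    ?_ ?_ intervalIntegrable_const ?_).continuousWithinAt
  · filter_upwards [hnear] with t ht
    exact (intervalIntegrable_one_div_add hf hab hlow (by linarith)).def'.aestronglyMeasurable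
  · filter_upwards [hnear] with t ht
    refine ae_of_all _ fun x hx => ?_
    rw [uIoc_of_le hab] at hx
    have := hlow x (Ioc_subset_Icc_self hx)
    rw [Real.norm_of_nonneg (by positivity [show 0 < f x + t by linarith]),
      ← one_div_div (s - r) 2]
    exact one_div_le_one_div_of_le (by linarith) (by linarith)
  · refine ae_of_all _ fun x hx => ?_
    rw [uIoc_of_le hab] at hx
    have := hlow x (Ioc_subset_Icc_self hx)
    exact continuousAt_const.div (continuousAt_const.add continuousAt_id) (by linarith)

end recipIntegral

lemma existsUnique_recipIntegral_eq_iff {f : ℝ → ℝ} {a b r c : ℝ} {L : EReal}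
    (hf : ContinuousOn f (Icc a b)) (hab : a < b) (hlow : ∀ x ∈ Icc a b, -r ≤ f x)
    (hL : Tendsto (fun s => (recipIntegral f a b s : EReal)) (𝓝[>] r) (𝓝 L)) (hc : 0 < c) :
    (∃! s, r < s ∧ recipIntegral f a b s = c) ↔ (c : EReal) < L :=
  (recipIntegral_strictAntiOn hf hab hlow).existsUnique_eq_iff_lt_of_tendsto
    (recipIntegral_continuousOn hf hab.le hlow) hL (tendsto_recipIntegral_atTop hab.le hlow) hc

lemma integral_div_add_mul_eq_recipIntegral {g : ℝ → ℝ} {a b ω J : ℝ} (hJ : J ≠ 0) :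
    ∫ x in a..b, J / (ω + g x * J) = recipIntegral g a b (ω / J) := by
  unfold recipIntegral
  congr 1 with x
  rw [← one_div_div, add_div, mul_div_cancel_right₀ _ hJ, add_comm]

lemma existsUnique_flux_iff {g : ℝ → ℝ} {a b r ω : ℝ} (hω : 0 < ω)
    (hr : ∀ s, r < s ↔ 0 < s ∧ ∀ x ∈ Icc a b, 0 < g x + s) :
    (∃! J, 0 < J ∧ (∀ x ∈ Icc a b, 0 < ω + g x * J) ∧ ∫ x in a..b, J / (ω + g x * J) = 1) ↔
      ∃! s, r < s ∧ recipIntegral g a b s = 1 := by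
  refine (Function.Involutive.toPerm (ω / ·) fun J => div_div_cancel₀ hω.ne').existsUnique_congr
    fun J => ?_
  change _ ↔ r < ω / J ∧ recipIntegral g a b (ω / J) = 1
  rw [hr, and_assoc]
  rcases le_or_gt J 0 with hJ | hJ
  · have : ¬ 0 < ω / J := (div_nonpos_of_nonneg_of_nonpos hω.le hJ).not_gt
    simp only [hJ.not_gt, this, false_and]
  · have hpos : ∀ x, 0 < ω + g x * J ↔ 0 < g x + ω / J := fun x => by
      rw [← div_pos_iff_of_pos_right hJ, add_div, mul_div_cancel_right₀ _ hJ.ne', add_comm]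
    simp only [integral_div_add_mul_eq_recipIntegral hJ.ne', hpos, hJ, div_pos hω hJ, true_and]

/-- Existence and uniqueness of the stationary flux `J*` for the asynchronous
state: a `J* > 0` with positive velocity and normalized stationary density
exists iff the limit `L` of `∫₀^{2π} 1/(K·Z θ + s) dθ` as `s → r⁺`
(taken in `EReal`, so it may be `+∞`) exceeds `1`. -/
theorem stationary_flux_exists_unique_iff
    (Z : ℝ → ℝ) (K ω : ℝ) (hω : 0 < ω)
    (hZ : ContinuousOn Z (Icc 0 (2 * π)))
    (r : ℝ)
    (hr : r = if ∀ θ ∈ Icc (0:ℝ) (2 * π), 0 ≤ K * Z θ then 0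
        else |sInf ((fun θ => K * Z θ) '' Icc (0:ℝ) (2 * π))|)
    (L : EReal)
    (hL : Filter.Tendsto
      (fun s : ℝ => (((∫ θ in (0:ℝ)..(2 * π), 1 / (K * Z θ + s) : ℝ)) : EReal))
      (nhdsWithin r (Ioi r)) (nhds L)) :
    (∃! J : ℝ, 0 < J ∧ (∀ θ ∈ Icc (0:ℝ) (2 * π), 0 < ω + K * Z θ * J) ∧
        ∫ θ in (0:ℝ)..(2 * π), J / (ω + K * Z θ * J) = 1)
      ↔ (1 : EReal) < L := by
  have h2π : (0 : ℝ) < 2 * π := by positivity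
  have hKZ : ContinuousOn (fun θ => K * Z θ) (Icc 0 (2 * π)) := continuousOn_const.mul hZ
  have hr_lt := lt_iff_pos_and_forall_add_pos isCompact_Icc (nonempty_Icc.2 h2π.le) hKZ hr
  have hlow : ∀ θ ∈ Icc 0 (2 * π), -r ≤ K * Z θ := fun θ hθ => le_of_not_gt fun h => by
    simpa using ((hr_lt (-(K * Z θ))).1 (by linarith)).2 θ hθ
  rw [existsUnique_flux_iff hω hr_lt, ← EReal.coe_one]
  exact existsUnique_recipIntegral_eq_iff hKZ h2π hlow hL one_pos
end

section
/- Let F : [x̲, x̄] → ℝ be continuous with F(x) > 0 for all x, let ω = 2π·(∫_{x̲}^{x̄} ds/F(s))⁻¹, and define the phase map θ(x) = ω·∫_{x̲}^{x} ds/F(s). If K > 0, then the condition lim_{s→0⁺} ∫₀^{2π} 1/(K·Z(θ)+s) dθ > 1, where Z(θ) = ω/F(x(θ)), is equivalent to K < x̄ − x̲. -/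
open Real MeasureTheory Set

/-- For an integrate-and-fire oscillator `ẋ = F(x)` on `[x̲, x̄]` with `F > 0`,
natural frequency `ω = 2π (∫ ds/F)⁻¹`, phase map `θ(x) = ω ∫_{x̲}^x ds/F`,
inverse state map `x(θ)` and PRC `Z(θ) = ω/F(x(θ))`: for an excitatory
coupling `K > 0`, the existence condition
`lim_{s→0⁺} ∫₀^{2π} 1/(K·Z θ + s) dθ > 1` (limit `L` taken in `EReal`)
holds iff `K < x̄ − x̲`. -/
theorem asynchronous_existence_iff_K_lt_threshold
    (F : ℝ → ℝ) (xa xb : ℝ) (hx : xa < xb)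
    (hF : ContinuousOn F (Icc xa xb)) (hFpos : ∀ x ∈ Icc xa xb, 0 < F x)
    (ω : ℝ) (hω : ω = 2 * π * (∫ s in xa..xb, 1 / F s)⁻¹)
    (θmap : ℝ → ℝ) (hθmap : ∀ x ∈ Icc xa xb, θmap x = ω * ∫ s in xa..x, 1 / F s)
    (xinv : ℝ → ℝ) (hxmem : ∀ θ ∈ Icc (0:ℝ) (2 * π), xinv θ ∈ Icc xa xb)
    (hxinv : ∀ θ ∈ Icc (0:ℝ) (2 * π), θmap (xinv θ) = θ)
    (Z : ℝ → ℝ) (hZ : ∀ θ ∈ Icc (0:ℝ) (2 * π), Z θ = ω / F (xinv θ))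
    (K : ℝ) (hK : 0 < K)
    (L : EReal)
    (hL : Filter.Tendsto
      (fun s : ℝ => (((∫ θ in (0:ℝ)..(2 * π), 1 / (K * Z θ + s) : ℝ)) : EReal))
      (nhdsWithin 0 (Ioi 0)) (nhds L)) :
    (1 : EReal) < L ↔ K < xb - xa := by
  have hab : xa ≤ xb := hx.le
  have huIcc : uIcc xa xb = Icc xa xb := uIcc_of_le hab
  have hFne : ∀ x ∈ Icc xa xb, F x ≠ 0 := fun x hx => (hFpos x hx).ne'
  have hinv_cont : ContinuousOn (fun s => 1 / F s) (Icc xa xb) :=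
    continuousOn_const.div hF hFne
  have hFI : IntervalIntegrable (fun s => 1 / F s) volume xa xb :=
    (hinv_cont.mono (by rw [huIcc])).intervalIntegrable
  set T : ℝ := ∫ s in xa..xb, 1 / F s with hT
  have hTpos : 0 < T := by
    apply intervalIntegral.intervalIntegral_pos_of_pos_on hFI
    · intro x hxm
      have : x ∈ Icc xa xb := Ioo_subset_Icc_self hxm
      exact one_div_pos.mpr (hFpos x this)
    · exact hx
  have hωpos : 0 < ω := by
    rw [hω]
    positivity
  -- primitive function
  set G : ℝ → ℝ := fun x => ω * ∫ s in xa..x, 1 / F s with hG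
  have hθeq : ∀ x ∈ Icc xa xb, θmap x = G x := hθmap
  have hθa : θmap xa = 0 := by
    rw [hθmap xa (left_mem_Icc.mpr hab), intervalIntegral.integral_same, mul_zero]
  have hθb : θmap xb = 2 * π := by
    rw [hθmap xb (right_mem_Icc.mpr hab), hω, ← hT]
    field_simp
  -- integrability on subintervals
  have hsub : ∀ u ∈ Icc xa xb, ∀ v ∈ Icc xa xb,
      IntervalIntegrable (fun s => 1 / F s) volume u v := fun u hu v hv =>
    hFI.mono_set (by rw [huIcc]; exact uIcc_subset_Icc hu hv)
  -- strict monotonicity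
  have hmono : StrictMonoOn θmap (Icc xa xb) := by
    intro u hu v hv huv
    rw [hθeq u hu, hθeq v hv]
    have hsplit : (∫ s in xa..u, 1 / F s) + ∫ s in u..v, 1 / F s
        = ∫ s in xa..v, 1 / F s :=
      intervalIntegral.integral_add_adjacent_intervals
        (hsub xa (left_mem_Icc.mpr hab) u hu) (hsub u hu v hv)
    have hpos : 0 < ∫ s in u..v, 1 / F s := by
      apply intervalIntegral.intervalIntegral_pos_of_pos_on (hsub u hu v hv)
      · intro t ht
        have : t ∈ Icc xa xb := ⟨hu.1.trans ht.1.le, ht.2.le.trans hv.2⟩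
        exact one_div_pos.mpr (hFpos t this)
      · exact huv
    have : (∫ s in xa..u, 1 / F s) < ∫ s in xa..v, 1 / F s := by linarith
    exact (mul_lt_mul_iff_right₀ hωpos).mpr this
  -- continuity of θmap on Icc
  have hGcont : ContinuousOn G (Icc xa xb) := by
    apply continuousOn_const.mul
    have : IntegrableOn (fun s => 1 / F s) (uIcc xa xb) volume := by
      rw [huIcc]
      exact hinv_cont.integrableOn_compact isCompact_Icc
    exact (intervalIntegral.continuousOn_primitive_interval this).mono (by rw [huIcc])
  have hθcont : ContinuousOn θmap (Icc xa xb) := hGcont.congr hθeq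
  -- derivative of θmap on Ioo
  have hderiv : ∀ x ∈ Ioo xa xb,
      HasDerivWithinAt θmap (ω * (1 / F x)) (Ioo xa xb) x := by
    intro x hxm
    have hxc : x ∈ Icc xa xb := Ioo_subset_Icc_self hxm
    have hnhds : Icc xa xb ∈ nhds x := Icc_mem_nhds hxm.1 hxm.2
    have hca : ContinuousAt (fun s => 1 / F s) x :=
      (hinv_cont x hxc).continuousAt hnhds
    have hmeas : StronglyMeasurableAtFilter (fun s => 1 / F s) (nhds x) volume :=
      ⟨Icc xa xb, hnhds, hinv_cont.aestronglyMeasurable measurableSet_Icc⟩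
    have hI : HasDerivAt (fun u => ∫ s in xa..u, 1 / F s) (1 / F x) x :=
      intervalIntegral.integral_hasDerivAt_right
        (hsub xa (left_mem_Icc.mpr hab) x hxc) hmeas hca
    have hGd : HasDerivAt G (ω * (1 / F x)) x := hI.const_mul ω
    exact (hGd.hasDerivWithinAt).congr
      (fun y hy => hθeq y (Ioo_subset_Icc_self hy))
      (hθeq x hxc)
  have hinj : InjOn θmap (Ioo xa xb) := (hmono.injOn).mono Ioo_subset_Icc_self
  -- image of Ioo
  have himg : θmap '' Ioo xa xb = Ioo 0 (2 * π) := by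
    apply Subset.antisymm
    · rintro _ ⟨y, hy, rfl⟩
      constructor
      · rw [← hθa]
        exact hmono (left_mem_Icc.mpr hab) (Ioo_subset_Icc_self hy) hy.1
      · rw [← hθb]
        exact hmono (Ioo_subset_Icc_self hy) (right_mem_Icc.mpr hab) hy.2
    · have := intermediate_value_Ioo hab hθcont
      rw [hθa, hθb] at this
      exact this
  -- xinv ∘ θmap = id on Icc
  have hxinv' : ∀ x ∈ Icc xa xb, xinv (θmap x) = x := by
    intro x hxc
    have hθm : θmap x ∈ Icc (0:ℝ) (2 * π) := by
      constructor
      · rw [← hθa]; exact hmono.monotoneOn (left_mem_Icc.mpr hab) hxc hxc.1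
      · rw [← hθb]; exact hmono.monotoneOn hxc (right_mem_Icc.mpr hab) hxc.2
    exact hmono.injOn (hxmem _ hθm) hxc (hxinv _ hθm)
  -- change of variables, for s > 0
  have hchange : ∀ s : ℝ, 0 < s →
      (∫ θ in (0:ℝ)..(2 * π), 1 / (K * Z θ + s))
        = ∫ x in xa..xb, ω / (K * ω + s * F x) := by
    intro s hs
    have h2π : (0:ℝ) ≤ 2 * π := by positivity
    rw [intervalIntegral.integral_of_le h2π, intervalIntegral.integral_of_le hab,
      integral_Ioc_eq_integral_Ioo, integral_Ioc_eq_integral_Ioo, ← himg,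
      integral_image_eq_integral_abs_deriv_smul measurableSet_Ioo hderiv hinj]
    apply setIntegral_congr_fun measurableSet_Ioo
    intro x hxm
    have hxc : x ∈ Icc xa xb := Ioo_subset_Icc_self hxm
    have hθm : θmap x ∈ Icc (0:ℝ) (2 * π) := by
      rw [← himg] at *
      exact Ioo_subset_Icc_self ⟨by rw [← hθa]; exact hmono (left_mem_Icc.mpr hab) hxc hxm.1,
        by rw [← hθb]; exact hmono hxc (right_mem_Icc.mpr hab) hxm.2⟩
    have hFx : 0 < F x := hFpos x hxc
    dsimp only
    rw [hZ _ hθm, hxinv' x hxc]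
    have habs : |ω * (1 / F x)| = ω * (1 / F x) := abs_of_pos (by positivity)
    rw [habs, smul_eq_mul]
    have hden : 0 < K * (ω / F x) + s := by positivity
    have hden2 : 0 < K * ω + s * F x := by positivity
    field_simp
  -- the limit of the transformed integral
  have hbound : ∃ M : ℝ, ∀ x ∈ Icc xa xb, F x ≤ M := by
    obtain ⟨M, hM⟩ := (isCompact_Icc.image_of_continuousOn hF).bddAbove
    exact ⟨M, fun x hxc => hM ⟨x, hxc, rfl⟩⟩
  set c : ℝ := (xb - xa) * (1 / K) with hc
  have hlim : Filter.Tendsto (fun s : ℝ => ∫ x in xa..xb, ω / (K * ω + s * F x))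
      (nhdsWithin 0 (Ioi 0)) (nhds c) := by
    have key : Filter.Tendsto (fun s : ℝ => ∫ x in xa..xb, ω / (K * ω + s * F x))
        (nhdsWithin 0 (Ioi 0)) (nhds (∫ x in xa..xb, (1:ℝ) / K)) := by
      apply intervalIntegral.tendsto_integral_filter_of_dominated_convergence
        (fun _ => 1 / K)
      · filter_upwards [self_mem_nhdsWithin] with s hs
        have hs' : (0:ℝ) < s := hs
        apply ContinuousOn.aestronglyMeasurable _ measurableSet_uIoc
        apply continuousOn_const.div
        · exact continuousOn_const.add (continuousOn_const.mul
            (hF.mono (by rw [uIoc_of_le hab]; exact Ioc_subset_Icc_self)))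
        · intro x hxm
          have hxc : x ∈ Icc xa xb := by
            rw [uIoc_of_le hab] at hxm; exact Ioc_subset_Icc_self hxm
          have hFx : 0 < F x := hFpos x hxc
          have : (0:ℝ) < K * ω + s * F x := by positivity
          exact this.ne'
      · filter_upwards [self_mem_nhdsWithin] with s hs
        have hs' : (0:ℝ) < s := hs
        filter_upwards with x hxm
        have hxc : x ∈ Icc xa xb := by
          rw [uIoc_of_le hab] at hxm; exact Ioc_subset_Icc_self hxm
        have hFx := hFpos x hxc
        have hden : 0 < K * ω + s * F x := by positivity
        rw [Real.norm_eq_abs, abs_of_pos (by positivity)]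
        rw [div_le_div_iff₀ hden hK]
        nlinarith [mul_pos hs' hFx]
      · exact intervalIntegrable_const
      · filter_upwards with x hxm
        have hxc : x ∈ Icc xa xb := by
          rw [uIoc_of_le hab] at hxm; exact Ioc_subset_Icc_self hxm
        have hFx := hFpos x hxc
        have hcont : ContinuousAt (fun s : ℝ => ω / (K * ω + s * F x)) 0 := by
          apply ContinuousAt.div continuousAt_const
          · exact continuousAt_const.add (continuousAt_id.mul continuousAt_const)
          · simp only [zero_mul, add_zero]
            positivity
        have := hcont.tendsto
        simp only [zero_mul, add_zero] at this
        have heq : ω / (K * ω) = 1 / K := by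
          field_simp
        rw [heq] at this
        exact this.mono_left nhdsWithin_le_nhds
    have : (∫ x in xa..xb, (1:ℝ) / K) = c := by
      rw [intervalIntegral.integral_const, smul_eq_mul, hc]
    rwa [this] at key
  -- conclude L = c
  have hLc : L = (c : EReal) := by
    have h1 : Filter.Tendsto
        (fun s : ℝ => (((∫ θ in (0:ℝ)..(2 * π), 1 / (K * Z θ + s) : ℝ)) : EReal))
        (nhdsWithin 0 (Ioi 0)) (nhds (c : EReal)) := by
      have h2 : Filter.Tendsto
          (fun s : ℝ => ((∫ x in xa..xb, ω / (K * ω + s * F x) : ℝ) : EReal))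
          (nhdsWithin 0 (Ioi 0)) (nhds (c : EReal)) :=
        (continuous_coe_real_ereal.tendsto c).comp hlim
      apply h2.congr'
      filter_upwards [self_mem_nhdsWithin] with s hs
      rw [hchange s hs]
    exact tendsto_nhds_unique hL h1
  rw [hLc]
  have h1 : (1 : EReal) = ((1:ℝ) : EReal) := by norm_cast
  rw [h1, EReal.coe_lt_coe_iff, hc, mul_one_div, lt_div_iff₀ hK, one_mul]
end

section
/- Suppose K·Z'(θ) < 0 for all θ ∈ [0,2π] and Z(θ) ≠ 0 for all θ. If ρ(2π, t̄) = ρ(θ, 0) · exp( −∫_θ^{2π} [J₀/(ω + K·Z(s)·J₀)] · K·Z'(s) ds ) for some flux values J₀ > 0 along the characteristic from (θ,0) to (2π,t̄), and the initial density satisfies ρ(θ,0) < 1/(K·Z(θ)) with K·Z(2π) > 0, then ρ(2π, t̄) < 1/(K·Z(2π)). -/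
/-!
Since `K·Z' < 0` and `K·Z(2π) > 0`, the function `g = K·Z` is positive and decreasing on
`[θ, 2π]`. Pointwise `J/(ω + g J) ≤ 1/g` and `g' ≤ 0`, so the integrand `J g'/(ω + g J)` is
bounded below by its `J → ∞` limit `g'/g = (log g)'`. Hence the growth factor is at most
`g(θ)/g(2π)`, and `ρ(2π) < g(θ)⁻¹ · g(θ)/g(2π) = 1/g(2π)`.
-/

open Real MeasureTheory Set

lemma div_le_div_add_mul_mul_of_nonpos {ω x j d : ℝ} (hω : 0 ≤ ω) (hx : 0 < x) (hj : 0 < j)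
    (hd : d ≤ 0) : d / x ≤ j / (ω + x * j) * d := by
  have hflux : j / (ω + x * j) ≤ 1 / x := by
    rw [div_le_div_iff₀ (by positivity) hx]
    nlinarith
  calc d / x = 1 / x * d := by ring
    _ ≤ j / (ω + x * j) * d := mul_le_mul_of_nonpos_right hflux hd

section LogDerivBound

variable {g g' J : ℝ → ℝ} {a b ω : ℝ}

lemma integral_div_self_eq_log_sub (hab : a ≤ b) (hg : ∀ s ∈ Icc a b, HasDerivAt g (g' s) s)
    (hg'c : ContinuousOn g' (Icc a b)) (hpos : ∀ s ∈ Icc a b, 0 < g s) :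
    ∫ s in a..b, g' s / g s = log (g b) - log (g a) := by
  have hcont : ContinuousOn g (Icc a b) := fun s hs => (hg s hs).continuousAt.continuousWithinAt
  have hint : IntervalIntegrable (fun s => g' s / g s) volume a b :=
    (hg'c.div hcont fun s hs => (hpos s hs).ne').intervalIntegrable_of_Icc hab
  refine intervalIntegral.integral_eq_sub_of_hasDerivAt (f := fun s => log (g s))
    (fun s hs => ?_) hint
  rw [uIcc_of_le hab] at hs
  exact (hg s hs).log (hpos s hs).ne'

lemma exp_neg_integral_div_add_mul_mul_le (hab : a ≤ b) (hω : 0 ≤ ω)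
    (hg : ∀ s ∈ Icc a b, HasDerivAt g (g' s) s) (hg'c : ContinuousOn g' (Icc a b))
    (hg' : ∀ s ∈ Icc a b, g' s ≤ 0) (hpos : ∀ s ∈ Icc a b, 0 < g s)
    (hJ : ∀ s ∈ Icc a b, 0 < J s) (hJc : ContinuousOn J (Icc a b)) :
    exp (-∫ s in a..b, J s / (ω + g s * J s) * g' s) ≤ g a / g b := by
  have hcont : ContinuousOn g (Icc a b) := fun s hs => (hg s hs).continuousAt.continuousWithinAt
  have hden : ∀ s ∈ Icc a b, 0 < ω + g s * J s := fun s hs =>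
    add_pos_of_nonneg_of_pos hω (mul_pos (hpos s hs) (hJ s hs))
  have hcmp : ∫ s in a..b, g' s / g s ≤ ∫ s in a..b, J s / (ω + g s * J s) * g' s :=
    intervalIntegral.integral_mono_on hab
      ((hg'c.div hcont fun s hs => (hpos s hs).ne').intervalIntegrable_of_Icc hab)
      (((hJc.div (continuousOn_const.add (hcont.mul hJc)) fun s hs => (hden s hs).ne').mul
        hg'c).intervalIntegrable_of_Icc hab)
      fun s hs => div_le_div_add_mul_mul_of_nonpos hω (hpos s hs) (hJ s hs) (hg' s hs)
  rw [integral_div_self_eq_log_sub hab hg hg'c hpos] at hcmp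
  have ha := hpos a (left_mem_Icc.2 hab)
  have hb := hpos b (right_mem_Icc.2 hab)
  calc exp (-∫ s in a..b, J s / (ω + g s * J s) * g' s)
      ≤ exp (log (g a) - log (g b)) := exp_le_exp.2 (by linarith)
    _ = g a / g b := by rw [exp_sub, exp_log ha, exp_log hb]

end LogDerivBound

theorem absorption_avoidance_bound_general
    (Z Z' : ℝ → ℝ) (K ω : ℝ) (hω : 0 < ω)
    (hZ : ∀ s, HasDerivAt Z (Z' s) s) (hZ'c : Continuous Z')
    (hKZ' : ∀ s ∈ Icc (0:ℝ) (2 * π), K * Z' s < 0)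
    (hKZ2π : 0 < K * Z (2 * π))
    (θ : ℝ) (hθ : θ ∈ Icc (0:ℝ) (2 * π))
    (J : ℝ → ℝ) (hJ : ∀ s, 0 < J s) (hJc : Continuous J)
    (ρθ0 ρ2π : ℝ)
    (hform : ρ2π = ρθ0 *
      Real.exp (-∫ s in θ..(2 * π), J s / (ω + K * Z s * J s) * (K * Z' s)))
    (hinit : ρθ0 < 1 / (K * Z θ)) :
    ρ2π < 1 / (K * Z (2 * π)) := by
  have hsub : Icc θ (2 * π) ⊆ Icc 0 (2 * π) := Icc_subset_Icc_left hθ.1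
  have hZc : Continuous Z := continuous_iff_continuousAt.2 fun s => (hZ s).continuousAt
  have hanti : AntitoneOn (fun s => K * Z s) (Icc 0 (2 * π)) :=
    antitoneOn_of_hasDerivWithinAt_nonpos (convex_Icc _ _) (continuous_const.mul hZc).continuousOn
      (fun s _ => ((hZ s).const_mul K).hasDerivWithinAt)
      fun s hs => (hKZ' s (interior_subset hs)).le
  have hpos : ∀ s ∈ Icc θ (2 * π), 0 < K * Z s := fun s hs =>
    hKZ2π.trans_le (hanti (hsub hs) (hsub (right_mem_Icc.2 hθ.2)) hs.2)
  have hgrowth := exp_neg_integral_div_add_mul_mul_le (g := fun s => K * Z s)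
    (g' := fun s => K * Z' s) hθ.2 hω.le (fun s _ => (hZ s).const_mul K)
    (continuous_const.mul hZ'c).continuousOn (fun s hs => (hKZ' s (hsub hs)).le) hpos
    (fun s _ => hJ s) hJc.continuousOn
  have hθpos := hpos θ (left_mem_Icc.2 hθ.2)
  rw [hform]
  calc ρθ0 * exp (-∫ s in θ..(2 * π), J s / (ω + K * Z s * J s) * (K * Z' s))
      < 1 / (K * Z θ) * exp (-∫ s in θ..(2 * π), J s / (ω + K * Z s * J s) * (K * Z' s)) :=
        mul_lt_mul_of_pos_right hinit (exp_pos _)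
    _ ≤ 1 / (K * Z θ) * (K * Z θ / (K * Z (2 * π))) := by gcongr
    _ = 1 / (K * Z (2 * π)) := by
        rw [one_div_mul_eq_div, div_div_cancel_left' hθpos.ne', one_div]

/-- Key estimate of Proposition 2 (case `K·Z(2π) > 0`): if `K·Z' < 0` on
`[0,2π]`, `Z ≠ 0`, `ρ(2π,t̄)` is given by the exponential formula with a
strictly positive flux `J` along the characteristic, and the initial density
satisfies `ρ(θ,0) < 1/(K·Z(θ))`, then `ρ(2π,t̄) < 1/(K·Z(2π))`. -/
theorem absorption_avoidance_bound
    (Z Z' : ℝ → ℝ) (K ω : ℝ) (hω : 0 < ω)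
    (hZ : ∀ s, HasDerivAt Z (Z' s) s) (hZ'c : Continuous Z')
    (hKZ' : ∀ s ∈ Icc (0:ℝ) (2 * π), K * Z' s < 0)
    (hZne : ∀ s ∈ Icc (0:ℝ) (2 * π), Z s ≠ 0)
    (hKZ2π : 0 < K * Z (2 * π))
    (θ : ℝ) (hθ : θ ∈ Icc (0:ℝ) (2 * π))
    (J : ℝ → ℝ) (hJ : ∀ s, 0 < J s) (hJc : Continuous J)
    (ρθ0 ρ2π : ℝ)
    (hform : ρ2π = ρθ0 *
      Real.exp (-∫ s in θ..(2 * π), J s / (ω + K * Z s * J s) * (K * Z' s)))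
    (hinit : ρθ0 < 1 / (K * Z θ)) :
    ρ2π < 1 / (K * Z (2 * π)) :=
  absorption_avoidance_bound_general Z Z' K ω hω hZ hZ'c hKZ' hKZ2π θ hθ J hJ hJc ρθ0 ρ2π hform
    hinit
end
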